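/- Let X be a complete CAT(0) space, f : X → (−∞, ∞] convex, lower semicontinuous and proper, and λ > 0. Then the resolvent J_λ^f(x) = argmin_{z∈X} [f(z) + (1/(2λ))d(x,z)²] satisfies, for every x, y ∈ X: f(J_λ^f(x)) + (1/(2λ))·d(J_λ^f(x), x)² ≤ f(y) + (1/(2λ))·d(x,y)² − (1/(2λ))·d(J_λ^f(x), y)². -/

import Mathlib

open Filter Topology Metric Set

/-- A (chosen) geodesic bicombing witnessing that `X` is a geodesic space:
`geo x y t` is the point at parameter fraction `t ∈ [0,1]` on a geodesic from `x` to `y`. -/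
structure Geodesic (X : Type*) [MetricSpace X] where
  geo : X → X → ℝ → X
  geo_zero : ∀ x y, geo x y 0 = x
  geo_one : ∀ x y, geo x y 1 = y
  geo_dist : ∀ x y : X, ∀ s ∈ Set.Icc (0:ℝ) 1, ∀ t ∈ Set.Icc (0:ℝ) 1,
    dist (geo x y s) (geo x y t) = |s - t| * dist x y

/-- The CN (Bruhat–Tits) inequality characterizing CAT(0) among geodesic spaces. -/
def CAT0 (X : Type*) [MetricSpace X] : Prop :=
  ∀ x y z m : X, dist x m = dist x y / 2 → dist y m = dist x y / 2 →
    dist z m ^ 2 ≤ dist z x ^ 2 / 2 + dist z y ^ 2 / 2 - dist x y ^ 2 / 4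

/-!
Let `p = J x` and let `z_t` be the point at fraction `t` on the geodesic from `p` to `y`.
Iterating the CN inequality along halvings gives, for dyadic `t = 2⁻ⁿ`,
`d(x, z_t)² ≤ (1 - t) d(x, p)² + t d(x, y)² - t (1 - t) d(p, y)²`.
Comparing `p` with `z_t` through the minimality of `p` and the convexity of `f`, every term of
order `1` cancels; dividing by `t` leaves the resolvent inequality up to an error `c t d(p, y)²`,
which vanishes as `n → ∞`.
-/

namespace Geodesic

variable {X : Type*} [MetricSpace X] (G : Geodesic X)

lemma dist_geo_left (x y : X) {t : ℝ} (ht : t ∈ Icc (0:ℝ) 1) :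
    dist x (G.geo x y t) = t * dist x y := by
  have h := G.geo_dist x y 0 (left_mem_Icc.2 zero_le_one) t ht
  rw [G.geo_zero] at h
  rw [h, zero_sub, abs_neg, abs_of_nonneg ht.1]

lemma dist_geo_geo_half (x y : X) {t : ℝ} (ht : t ∈ Icc (0:ℝ) 1) :
    dist (G.geo x y t) (G.geo x y (t / 2)) = t / 2 * dist x y := by
  rw [G.geo_dist x y t ht (t / 2) ⟨by linarith [ht.1], by linarith [ht.2]⟩,
    abs_of_nonneg (by linarith [ht.1])]
  ring

end Geodesic

lemma half_pow_mem_Icc (n : ℕ) : (1 / 2 : ℝ) ^ n ∈ Icc (0:ℝ) 1 :=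
  ⟨by positivity, pow_le_one₀ (by norm_num) (by norm_num)⟩

lemma CAT0.dist_sq_geo_half_pow_le {X : Type*} [MetricSpace X] (hX : CAT0 X)
    (G : Geodesic X) (x p y : X) (n : ℕ) :
    dist x (G.geo p y ((1 / 2) ^ n)) ^ 2 ≤
      (1 - (1 / 2) ^ n) * dist x p ^ 2 + (1 / 2 : ℝ) ^ n * dist x y ^ 2
        - (1 / 2) ^ n * (1 - (1 / 2) ^ n) * dist p y ^ 2 := by
  induction n with
  | zero => simp [G.geo_one]
  | succ n ih =>
    set t : ℝ := (1 / 2) ^ n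
    have ht : t ∈ Icc (0:ℝ) 1 := half_pow_mem_Icc n
    have hpt := G.dist_geo_left p y ht
    have hpt2 := G.dist_geo_left p y (t := t / 2) ⟨by linarith [ht.1], by linarith [ht.2]⟩
    -- the midpoint of `[p, z_t]` is `z_{t/2}`
    have hCN := hX p (G.geo p y t) x (G.geo p y (t / 2))
      (by rw [hpt, hpt2]; ring) (by rw [G.dist_geo_geo_half p y ht, hpt]; ring)
    rw [hpt] at hCN
    rw [show (1 / 2 : ℝ) ^ (n + 1) = t / 2 by rw [pow_succ]; ring]
    nlinarith [sq_nonneg (dist p y)]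

lemma le_of_forall_le_add_mul_half_pow {a b C : ℝ} (h : ∀ n : ℕ, a ≤ b + C * (1 / 2) ^ n) :
    a ≤ b := by
  have hlim : Tendsto (fun n : ℕ => b + C * (1 / 2 : ℝ) ^ n) atTop (𝓝 (b + C * 0)) :=
    ((tendsto_pow_atTop_nhds_zero_of_lt_one (by norm_num) (by norm_num)).const_mul C).const_add b
  simpa using ge_of_tendsto' hlim h

/-- Here `p` stands for `J x` and `c` for `1 / (2λ)`. -/
lemma resolvent_inequality_of_coe {X : Type*} [MetricSpace X] (G : Geodesic X) (hX : CAT0 X)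
    (f : X → EReal)
    (hconv : ∀ x y : X, ∀ t ∈ Icc (0:ℝ) 1,
      f (G.geo x y t) ≤ ((1 - t : ℝ) : EReal) * f x + ((t : ℝ) : EReal) * f y)
    {c : ℝ} (hc : 0 ≤ c) {x p y : X}
    (hmin : ∀ z, f p + ((c * dist p x ^ 2 : ℝ) : EReal) ≤ f z + ((c * dist x z ^ 2 : ℝ) : EReal))
    {a b : ℝ} (ha : f p = a) (hb : f y = b) :
    a + c * dist p x ^ 2 ≤ b + c * dist x y ^ 2 - c * dist p y ^ 2 := by
  refine le_of_forall_le_add_mul_half_pow (C := c * dist p y ^ 2) fun n => ?_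
  set t : ℝ := (1 / 2) ^ n
  have htpos : 0 < t := by positivity
  have hz : f (G.geo p y t) ≤ (((1 - t) * a + t * b : ℝ) : EReal) := by
    have := hconv p y t (half_pow_mem_Icc n)
    rw [ha, hb] at this
    exact_mod_cast this
  have hmin_t : a + c * dist p x ^ 2 ≤ (1 - t) * a + t * b + c * dist x (G.geo p y t) ^ 2 := by
    have := (hmin (G.geo p y t)).trans (add_le_add_left hz _)
    rw [ha] at this
    exact_mod_cast this
  have hQ := hX.dist_sq_geo_half_pow_le G x p y n
  rw [dist_comm x p] at hQ
  -- after substituting `hQ` into `hmin_t`, both sides carry a common factor `t`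
  have hscaled : t * (a + c * dist p x ^ 2) ≤
      t * (b + c * dist x y ^ 2 - c * dist p y ^ 2 + c * dist p y ^ 2 * t) := by
    nlinarith [mul_le_mul_of_nonneg_left hQ hc]
  linarith [le_of_mul_le_mul_left hscaled htpos]

theorem resolvent_inequality_general {X : Type*} [MetricSpace X]
    (G : Geodesic X) (hX : CAT0 X)
    (f : X → EReal)
    (hconv : ∀ x y : X, ∀ t ∈ Set.Icc (0:ℝ) 1,
      f (G.geo x y t) ≤ ((1 - t : ℝ) : EReal) * f x + ((t : ℝ) : EReal) * f y)
    (lam : ℝ) (hlam : 0 < lam)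
    (J : X → X)
    (hJ : ∀ x z : X,
      f (J x) + ((1 / (2 * lam) * dist (J x) x ^ 2 : ℝ) : EReal) ≤
        f z + ((1 / (2 * lam) * dist x z ^ 2 : ℝ) : EReal)) :
    ∀ x y : X,
      f (J x) + ((1 / (2 * lam) * dist (J x) x ^ 2 : ℝ) : EReal) ≤
        f y + ((1 / (2 * lam) * dist x y ^ 2 : ℝ) : EReal)
          - ((1 / (2 * lam) * dist (J x) y ^ 2 : ℝ) : EReal) := by
  intro x y
  have hmin_y := hJ x y
  induction hb : f y using EReal.rec with
  | bot =>
    rw [hb, EReal.bot_add, le_bot_iff] at hmin_y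
    rw [hmin_y, EReal.bot_add, EReal.bot_sub]
  | top => rw [EReal.top_add_coe, EReal.top_sub_coe]; exact le_top
  | coe b =>
    induction ha : f (J x) using EReal.rec with
    | bot => rw [EReal.bot_add]; exact bot_le
    | top =>
      rw [ha, hb, EReal.top_add_coe, top_le_iff] at hmin_y
      exact absurd (by exact_mod_cast hmin_y) (EReal.coe_ne_top _)
    | coe a =>
      have h := resolvent_inequality_of_coe G hX f hconv (by positivity) (hJ x) ha hb
      exact_mod_cast h

/-- The resolvent inequality for a convex, lower semicontinuous, proper function on a
complete CAT(0) space: if `J x` minimizes `z ↦ f z + (1/(2λ)) d(x,z)²`, then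
`f (J x) + (1/(2λ)) d(J x, x)² ≤ f y + (1/(2λ)) d(x,y)² − (1/(2λ)) d(J x, y)²`. -/
theorem resolvent_inequality {X : Type*} [MetricSpace X] [CompleteSpace X]
    (G : Geodesic X) (hX : CAT0 X)
    (f : X → EReal) (hne_bot : ∀ x, f x ≠ ⊥) (hproper : ∃ x, f x ≠ ⊤)
    (hconv : ∀ x y : X, ∀ t ∈ Set.Icc (0:ℝ) 1,
      f (G.geo x y t) ≤ ((1 - t : ℝ) : EReal) * f x + ((t : ℝ) : EReal) * f y)
    (hlsc : LowerSemicontinuous f)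
    (lam : ℝ) (hlam : 0 < lam)
    (J : X → X)
    (hJ : ∀ x z : X,
      f (J x) + ((1 / (2 * lam) * dist (J x) x ^ 2 : ℝ) : EReal) ≤
        f z + ((1 / (2 * lam) * dist x z ^ 2 : ℝ) : EReal)) :
    ∀ x y : X,
      f (J x) + ((1 / (2 * lam) * dist (J x) x ^ 2 : ℝ) : EReal) ≤
        f y + ((1 / (2 * lam) * dist x y ^ 2 : ℝ) : EReal)
          - ((1 / (2 * lam) * dist (J x) y ^ 2 : ℝ) : EReal) :=
  resolvent_inequality_general G hX f hconv lam hlam J hJ
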